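/- Let D be an integral domain with quotient field K, D ≠ K, and let {S_λ} be a family of multiplicative subsets of D such that D = ⋂_λ D_{S_λ}, each localization D_{S_λ} is a weakly Krull domain, and the intersection D = ⋂_λ D_{S_λ} has finite character (each nonzero element of D is a nonunit in only finitely many D_{S_λ}). Then D is a weakly Krull domain. -/

import Mathlib

open Pointwise

namespace WeaklyKrullPaper

/-! ### Ring-theoretic notions -/

section Ring

variable (D : Type*) [CommRing D]

/-- `P` is a height-one prime ideal of the domain `D`. -/
def IsHeightOnePrime (P : Ideal D) : Prop :=
  P.IsPrime ∧ P ≠ ⊥ ∧ ∀ Q : Ideal D, Q.IsPrime → Q < P → Q = ⊥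

/-- The fraction `a / b` (an element of the quotient field of `D`) lies in the
localization `D_P` of `D` at the prime `P`, i.e. `a / b = a' / s` for some `s ∉ P`. -/
def MemLocAtPrime (P : Ideal D) (a b : D) : Prop :=
  ∃ a' s : D, s ∉ P ∧ a * s = a' * b

/-- `D` is a weakly Krull domain: `D` is not a field,
`D = ⋂_{P ∈ X¹(D)} D_P` (expressed via fractions `a / b` of the quotient field), and
every nonzero nonunit of `D` lies in only finitely many height-one primes. -/
def IsWeaklyKrullDomain : Prop :=
  ¬ IsField D ∧
  (∀ a b : D, b ≠ 0 →
    ((∀ P : Ideal D, IsHeightOnePrime D P → MemLocAtPrime D P a b) ↔ b ∣ a)) ∧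
  (∀ d : D, d ≠ 0 → ¬ IsUnit d →
    {P : Ideal D | IsHeightOnePrime D P ∧ d ∈ P}.Finite)

/-- For an (integral) ideal `J` of `D` and `x ∈ D` : `x` belongs to the divisorial
closure `J_v = (J⁻¹)⁻¹` of `J`, expressed via fractions: for every element `a / b`
of the quotient field with `(a / b) • J ⊆ D` one has `(a / b) * x ∈ D`. -/
def MemV (J : Ideal D) (x : D) : Prop :=
  ∀ a b : D, b ≠ 0 → (∀ j ∈ J, b ∣ a * j) → b ∣ a * x

/-- `x` belongs to `I_t = ⋃ { J_v : J a finitely generated subideal of I }`. -/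
def MemT (I : Ideal D) (x : D) : Prop :=
  ∃ J : Ideal D, J.FG ∧ J ≤ I ∧ MemV D J x

/-- `I` is a `t`-ideal, i.e. `I_t = I`. -/
def IsTIdeal (I : Ideal D) : Prop := ∀ x : D, MemT D I x → x ∈ I

/-- `I` is a `v`-ideal (divisorial ideal), i.e. `I_v = I`. -/
def IsVIdeal (I : Ideal D) : Prop := ∀ x : D, MemV D I x → x ∈ I

/-- `P` is a maximal `t`-ideal: maximal among proper integral `t`-ideals of `D`. -/
def IsMaxTIdeal (P : Ideal D) : Prop :=
  P ≠ ⊤ ∧ IsTIdeal D P ∧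
  ∀ I : Ideal D, I ≠ ⊤ → IsTIdeal D I → P ≤ I → I = P

/-- `D` is a UMT-domain: every upper to zero in `D[X]` (a nonzero prime of `D[X]`
contracting to `(0)` in `D`) is a maximal `t`-ideal of `D[X]`. -/
def IsUMTDomain : Prop :=
  ∀ Q : Ideal (Polynomial D), Q.IsPrime → Q ≠ ⊥ →
    Q.comap (Polynomial.C : D →+* Polynomial D) = ⊥ →
    IsMaxTIdeal (Polynomial D) Q

/-- `D` is a Mori domain: the ascending chain condition holds on integral `v`-ideals. -/
def IsMoriDomain : Prop :=
  ∀ c : ℕ → Ideal D, (∀ n, c n ≤ c (n + 1)) → (∀ n, IsVIdeal D (c n)) →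
    ∃ N, ∀ n, N ≤ n → c n = c N

/-- The localization `D_P` is a valuation domain: for all nonzero `a b : D`,
either `a / b ∈ D_P` or `b / a ∈ D_P`. -/
def LocalizationAtIsValuation (P : Ideal D) : Prop :=
  ∀ a b : D, a ≠ 0 → b ≠ 0 → MemLocAtPrime D P a b ∨ MemLocAtPrime D P b a

/-- `D` is a generalized Krull domain: a weakly Krull domain with `D_P` a valuation
domain for all maximal `t`-ideals `P`. -/
def IsGeneralizedKrullDomain : Prop :=
  IsWeaklyKrullDomain D ∧
  ∀ P : Ideal D, IsMaxTIdeal D P → LocalizationAtIsValuation D P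

/-- `I` is an invertible ideal of `D`: `I * J` is a nonzero principal ideal for some ideal `J`. -/
def IsInvertibleIdeal (I : Ideal D) : Prop :=
  ∃ (J : Ideal D) (a : D), a ≠ 0 ∧ I * J = Ideal.span {a}

/-- `D` is a Prüfer domain: every nonzero finitely generated ideal is invertible. -/
def IsPrueferDomain : Prop :=
  ∀ I : Ideal D, I.FG → I ≠ ⊥ → IsInvertibleIdeal D I

/-- The conductor `(D : D̂)` of `D` into its complete integral closure `D̂` is nonzero:
there is a nonzero `d ∈ D` with `d • D̂ ⊆ D`, where the elements of `D̂` are the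
almost integral fractions `a / b` (those with `c * (a / b)^n ∈ D` for all `n`, for
some fixed nonzero `c`). -/
def HasNonzeroConductor : Prop :=
  ∃ d : D, d ≠ 0 ∧ ∀ a b : D, b ≠ 0 →
    (∃ c : D, c ≠ 0 ∧ ∀ n : ℕ, b ^ n ∣ c * a ^ n) → b ∣ d * a

/-- `D` is a weakly factorial domain: every nonzero nonunit is a finite product of
primary elements. -/
def IsWeaklyFactorialDomain : Prop :=
  ∀ a : D, a ≠ 0 → ¬ IsUnit a →
    ∃ (n : ℕ) (f : Fin n → D),
      (∀ i, (Ideal.span {f i}).IsPrimary) ∧ a = ∏ i, f i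

/-- `D` is a GCD-domain: any two nonzero elements have a greatest common divisor. -/
def IsGCDDomain : Prop :=
  ∀ a b : D, a ≠ 0 → b ≠ 0 →
    ∃ g : D, g ∣ a ∧ g ∣ b ∧ ∀ c : D, c ∣ a → c ∣ b → c ∣ g

end Ring

/-! ### Torsion-free abelian groups and types -/

/-- A (torsion-free abelian) group is torsion-free. -/
def AddGroupTorsionFree (G : Type*) [AddCommGroup G] : Prop :=
  ∀ (n : ℕ) (g : G), 0 < n → n • g = 0 → g = 0

/-- `G` is of type `(0,0,0,…)`: the ascending chain condition holds on cyclic subgroups. -/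
def IsTypeZero (G : Type*) [AddCommGroup G] : Prop :=
  ∀ c : ℕ → G,
    (∀ n, AddSubgroup.zmultiples (c n) ≤ AddSubgroup.zmultiples (c (n + 1))) →
    ∃ N, ∀ n, N ≤ n → AddSubgroup.zmultiples (c n) = AddSubgroup.zmultiples (c N)

/-- The natural number `q` divides `g` in `G`. -/
def NatDvdElem (G : Type*) [AddCommGroup G] (q : ℕ) (g : G) : Prop :=
  ∃ h : G, q • h = g

/-- `G` is of type `(0,0,0,…)` except `p`: for each nonzero `g ∈ G`, infinitely many
prime numbers do not divide `g`, and for each prime `q ≠ p` some power `q^n` does not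
divide `g`. -/
def IsTypeZeroExcept (G : Type*) [AddCommGroup G] (p : ℕ) : Prop :=
  ∀ g : G, g ≠ 0 →
    {q : ℕ | q.Prime ∧ ¬ NatDvdElem G q g}.Infinite ∧
    ∀ q : ℕ, q.Prime → q ≠ p → ∃ n : ℕ, 0 < n ∧ ¬ NatDvdElem G (q ^ n) g

/-! ### Monoid-theoretic notions

A torsion-free monoid `Γ` with quotient group `G` is represented as an `AddSubmonoid`
of a torsion-free abelian group `G` which generates `G` as a group. -/

section Monoid

variable {G : Type*} [AddCommGroup G] (Γ : AddSubmonoid G)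

/-- `G` is the quotient group of `Γ`: every element of `G` is a difference of elements of `Γ`. -/
def IsQuotientGroupOf : Prop := ∀ g : G, ∃ a ∈ Γ, ∃ b ∈ Γ, g = a - b

/-- `S` is an (`s`-)ideal of the monoid `Γ`. -/
def IsMonIdeal (S : Set G) : Prop :=
  S ⊆ (Γ : Set G) ∧ ∀ s ∈ S, ∀ γ ∈ Γ, s + γ ∈ S

/-- `S` is a prime ideal of the monoid `Γ`. -/
def IsPrimeMonIdeal (S : Set G) : Prop :=
  IsMonIdeal Γ S ∧ S ≠ (Γ : Set G) ∧
  ∀ a ∈ Γ, ∀ b ∈ Γ, a + b ∈ S → a ∈ S ∨ b ∈ S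

/-- `S` is a height-one prime ideal of the monoid `Γ`. -/
def IsHeightOneMonPrime (S : Set G) : Prop :=
  IsPrimeMonIdeal Γ S ∧ S.Nonempty ∧
  ∀ T : Set G, IsPrimeMonIdeal Γ T → T ⊂ S → T = ∅

/-- The localization `X_S` (inside `G`) of a subset `X ⊆ G` at the multiplicative
(additive) set `Γ \ S`. -/
def LocOfAt (X : Set G) (S : Set G) : Set G :=
  {g : G | ∃ x ∈ X, ∃ s ∈ (Γ : Set G) \ S, g = x - s}

/-- `Γ` is a weakly Krull monoid: `Γ = ⋂_{P ∈ X¹(Γ)} Γ_P` (inside the quotient group)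
and every nonunit of `Γ` lies in only finitely many height-one primes. -/
def IsWeaklyKrullMonoid : Prop :=
  (⋂ S ∈ {S : Set G | IsHeightOneMonPrime Γ S}, LocOfAt Γ (Γ : Set G) S) = (Γ : Set G) ∧
  ∀ γ ∈ Γ, -γ ∉ Γ → {S : Set G | IsHeightOneMonPrime Γ S ∧ γ ∈ S}.Finite

/-- The inverse `X⁻¹ = (Γ : X)` of a subset `X ⊆ G` with respect to `Γ`. -/
def MonInv (X : Set G) : Set G := {y : G | ∀ x ∈ X, y + x ∈ Γ}

/-- `g` belongs to `X_v = (X⁻¹)⁻¹`. -/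
def MemVMon (X : Set G) (g : G) : Prop :=
  ∀ y : G, (∀ x ∈ X, y + x ∈ Γ) → y + g ∈ Γ

/-- `g` belongs to `X_t`, the union of `J_v` over the finitely generated subideals
`J` of `X`. -/
def MemTMon (X : Set G) (g : G) : Prop :=
  ∃ F : Finset G, (F : Set G) ⊆ X ∧ MemVMon Γ (F : Set G) g

/-- `S` is a `t`-ideal of `Γ` : an ideal with `S_t = S`. -/
def IsTMonIdeal (S : Set G) : Prop :=
  IsMonIdeal Γ S ∧ ∀ g : G, MemTMon Γ S g → g ∈ S

/-- `S` is a maximal `t`-ideal of `Γ`: maximal among proper `t`-ideals. -/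
def IsMaxTMonIdeal (S : Set G) : Prop :=
  IsTMonIdeal Γ S ∧ S ≠ (Γ : Set G) ∧
  ∀ T : Set G, IsTMonIdeal Γ T → T ≠ (Γ : Set G) → S ⊆ T → T = S

/-- The integral closure (root closure) `Γ̄` of `Γ` in its quotient group. -/
def RootClosure : Set G := {g : G | ∃ n : ℕ, 0 < n ∧ n • g ∈ Γ}

/-- `Γ` is integrally closed (root closed) in its quotient group. -/
def IsIntegrallyClosedMonoid : Prop := RootClosure Γ = (Γ : Set G)

/-- `Γ` is a UMT-monoid: `Γ̄_S` is a valuation monoid for every maximal `t`-ideal `S` of `Γ`. -/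
def IsUMTMonoid : Prop :=
  ∀ S : Set G, IsMaxTMonIdeal Γ S →
    ∀ g : G, g ∈ LocOfAt Γ (RootClosure Γ) S ∨ -g ∈ LocOfAt Γ (RootClosure Γ) S

/-- The ideal `X` of `Γ` is `t`-invertible: `(X * X⁻¹)_t = Γ`. -/
def IsTInvertibleMonIdeal (X : Set G) : Prop :=
  {g : G | MemTMon Γ (X + MonInv Γ X) g} = (Γ : Set G)

/-- `Γ` is a Prüfer `v`-multiplication monoid: every (nonempty) finitely generated
ideal of `Γ` is `t`-invertible. -/
def IsPvMM : Prop :=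
  ∀ F : Finset G, (F : Set G) ⊆ (Γ : Set G) → F.Nonempty →
    IsTInvertibleMonIdeal Γ ((F : Set G) + (Γ : Set G))

/-- `Γ` is a generalized Krull monoid: weakly Krull, and `Γ_S` is a valuation monoid
for every maximal `t`-ideal `S`. -/
def IsGeneralizedKrullMonoid : Prop :=
  IsWeaklyKrullMonoid Γ ∧
  ∀ S : Set G, IsMaxTMonIdeal Γ S →
    ∀ g : G, g ∈ LocOfAt Γ (Γ : Set G) S ∨ -g ∈ LocOfAt Γ (Γ : Set G) S

/-- `Q` is a primary ideal of `Γ`. -/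
def IsPrimaryMonIdeal (Q : Set G) : Prop :=
  IsMonIdeal Γ Q ∧ Q ≠ (Γ : Set G) ∧
  ∀ a ∈ Γ, ∀ b ∈ Γ, a + b ∈ Q → a ∈ Q ∨ ∃ n : ℕ, 0 < n ∧ n • b ∈ Q

/-- `Γ` is a weakly factorial monoid: every nonunit of `Γ` is a finite sum of primary
elements (elements generating a primary ideal). -/
def IsWeaklyFactorialMonoid : Prop :=
  ∀ γ ∈ Γ, -γ ∉ Γ →
    ∃ (n : ℕ) (f : Fin n → G),
      (∀ i, f i ∈ Γ ∧ IsPrimaryMonIdeal Γ (({f i} : Set G) + (Γ : Set G))) ∧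
      γ = ∑ i, f i

/-- divisibility in `Γ`. -/
def DvdMon (a b : G) : Prop := ∃ c ∈ Γ, b = a + c

/-- `Γ` is a GCD-monoid: any two elements of `Γ` have a greatest common divisor in `Γ`. -/
def IsGCDMonoid : Prop :=
  ∀ a ∈ Γ, ∀ b ∈ Γ, ∃ d ∈ Γ, DvdMon Γ d a ∧ DvdMon Γ d b ∧
    ∀ e ∈ Γ, DvdMon Γ e a → DvdMon Γ e b → DvdMon Γ e d

/-- `p` is a prime element of the sub-semigroup `M ⊆ G`. -/
def IsPrimeElemOf (M : Set G) (p : G) : Prop :=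
  p ∈ M ∧ -p ∉ M ∧
  ∀ a ∈ M, ∀ b ∈ M, (∃ c ∈ M, a + b = p + c) →
    (∃ c ∈ M, a = p + c) ∨ (∃ c ∈ M, b = p + c)

/-- The sub-semigroup `M ⊆ G` is factorial: every nonunit of `M` is a finite sum of
prime elements of `M`. -/
def IsFactorialSubset (M : Set G) : Prop :=
  ∀ x ∈ M, -x ∉ M →
    ∃ (n : ℕ) (f : Fin n → G), (∀ i, IsPrimeElemOf M (f i)) ∧ x = ∑ i, f i

/-- `Γ` is seminormal: `2x, 3x ∈ Γ` implies `x ∈ Γ` for `x` in the quotient group. -/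
def IsSeminormalMonoid : Prop :=
  ∀ g : G, (2 : ℕ) • g ∈ Γ → (3 : ℕ) • g ∈ Γ → g ∈ Γ

/-- `Γ` is (isomorphic to) a numerical monoid. -/
def IsNumericalMonoid : Prop :=
  ∃ Δ : AddSubmonoid ℕ, (Set.univ \ (Δ : Set ℕ)).Finite ∧ Nonempty (↥Γ ≃+ ↥Δ)

end Monoid

/-! ### Ideals of semigroup rings -/

section SemigroupRing

variable (D : Type*) [CommRing D] (M : Type*) [AddCommMonoid M]

/-- For an ideal `P` of `D`, the ideal `P[M]` of `D[M]` of elements all of whose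
coefficients lie in `P`. -/
noncomputable def coeffIdeal (P : Ideal D) : Ideal (AddMonoidAlgebra D M) :=
  Ideal.span {f : AddMonoidAlgebra D M | ∀ m : M, f.coeff m ∈ P}

/-- For an ideal `S` of the monoid `M`, the ideal `D[S]` of `D[M]` of elements all of
whose exponents lie in `S`. -/
noncomputable def expIdeal (S : Set M) : Ideal (AddMonoidAlgebra D M) :=
  Ideal.span {f : AddMonoidAlgebra D M | ∀ m ∈ f.coeff.support, m ∈ S}

/-- The ideal `C(f)` of `D[M]` generated by the monomials of `f`. -/
noncomputable def monomialContentIdeal (f : AddMonoidAlgebra D M) : Ideal (AddMonoidAlgebra D M) :=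
  Ideal.span {g : AddMonoidAlgebra D M | ∃ m ∈ f.coeff.support, g = AddMonoidAlgebra.single m (f.coeff m)}

end SemigroupRing

/-! ### Sets of lengths -/

section Lengths

/-- The set of lengths of `a`: the set of all `n` such that `a` is associated to a
product of `n` irreducible elements. (Units have set of lengths `{0}`.) -/
def lengthSet (R : Type*) [CommMonoid R] (a : R) : Set ℕ :=
  {n | ∃ f : Fin n → R, (∀ i, Irreducible (f i)) ∧ Associated a (∏ i, f i)}

/-- The system of sets of lengths of a domain `R`. -/
def systemOfLengths (R : Type*) [CommMonoidWithZero R] : Set (Set ℕ) :=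
  {L | ∃ a : R, a ≠ 0 ∧ L = lengthSet R a}

/-- The full system of sets of lengths `{{0},{1}} ∪ {L ⊆ ℕ_{≥2} finite nonempty}`. -/
def FullSystem : Set (Set ℕ) :=
  {({0} : Set ℕ), ({1} : Set ℕ)} ∪
    {L : Set ℕ | L.Finite ∧ L.Nonempty ∧ ∀ n ∈ L, 2 ≤ n}

/-- The system of sets of lengths of `R` is full. -/
def HasFullSystemOfLengths (R : Type*) [CommMonoidWithZero R] : Prop :=
  systemOfLengths R = FullSystem

/-- `R` is half-factorial: `|L(a)| = 1` for every nonzero nonunit `a`. -/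
def IsHalfFactorial (R : Type*) [CommMonoidWithZero R] : Prop :=
  ∀ a : R, a ≠ 0 → ¬ IsUnit a → ∃ n : ℕ, lengthSet R a = {n}

/-- The set of distances of a set `L ⊆ ℕ`. -/
def deltaOfSet (L : Set ℕ) : Set ℕ :=
  {d | 0 < d ∧ ∃ l ∈ L, l + d ∈ L ∧ L ∩ Set.Icc l (l + d) = {l, l + d}}

/-- The set of distances `Δ(R)`. -/
def deltaSet (R : Type*) [CommMonoidWithZero R] : Set ℕ :=
  {d | ∃ a : R, a ≠ 0 ∧ d ∈ deltaOfSet (lengthSet R a)}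

/-- The union `U_k(R)` of all sets of lengths containing `k`. -/
def unionOfLengths (R : Type*) [CommMonoidWithZero R] (k : ℕ) : Set ℕ :=
  {m | ∃ a : R, a ≠ 0 ∧ k ∈ lengthSet R a ∧ m ∈ lengthSet R a}

end Lengths

/-! ### The `v`-class group -/

section ClassGroup

variable (R : Type*) [CommRing R] [IsDomain R]

/-- The `v`-closure `I_v = (I⁻¹)⁻¹` of a fractional ideal. -/
noncomputable def vOp (I : FractionalIdeal (nonZeroDivisors R) (FractionRing R)) :
    FractionalIdeal (nonZeroDivisors R) (FractionRing R) := (I⁻¹)⁻¹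

/-- `I` is a `v`-invertible `v`-ideal (divisorial fractional ideal with `(I I⁻¹)_v = R`). -/
def IsVInvVIdeal (I : FractionalIdeal (nonZeroDivisors R) (FractionRing R)) : Prop :=
  vOp R I = I ∧ vOp R (I * I⁻¹) = 1

/-- Two `v`-invertible `v`-ideals are equivalent iff they differ by a nonzero principal
fractional ideal. -/
def CvRel (I J : {I : FractionalIdeal (nonZeroDivisors R) (FractionRing R) // IsVInvVIdeal R I}) :
    Prop :=
  ∃ x : FractionRing R, x ≠ 0 ∧
    (I : FractionalIdeal (nonZeroDivisors R) (FractionRing R)) =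
      FractionalIdeal.spanSingleton (nonZeroDivisors R) x *
        (J : FractionalIdeal (nonZeroDivisors R) (FractionRing R))

/-- The `v`-class group `C_v(R)`: `v`-invertible `v`-ideals modulo principal fractional ideals. -/
def CvClassGroup : Type _ := Quot (CvRel R)

end ClassGroup

/-! ### Pseudo-Hilbertian fields -/

/-- `K` is pseudo-Hilbertian: any finite tuple `a₀, …, a_n` with `a₀ ≠ 0` arises as the
sequence of low-order coefficients of some irreducible polynomial in `K[X]`. -/
def IsPseudoHilbertian (K : Type*) [Field K] : Prop :=
  ∀ (n : ℕ) (a : Fin (n + 1) → K), a 0 ≠ 0 →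
    ∃ f : Polynomial K, Irreducible f ∧ ∀ i : Fin (n + 1), f.coeff (i : ℕ) = a i

end WeaklyKrullPaper

namespace WeaklyKrullPaper


section Aux

variable {D : Type*} [CommRing D] [IsDomain D] {M : Submonoid D}

private theorem aux_inj (h0 : (0 : D) ∉ M) :
    Function.Injective (algebraMap D (Localization M)) :=
  IsLocalization.injective _ (fun s hs => mem_nonZeroDivisors_of_ne_zero fun h => h0 (h ▸ hs))

private theorem aux_dvd_iff (h0 : (0 : D) ∉ M) (a b : D) :
    algebraMap D (Localization M) b ∣ algebraMap D (Localization M) a ↔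
      ∃ a' s : D, s ∈ M ∧ a * s = a' * b := by
  constructor
  · rintro ⟨c, hc⟩
    obtain ⟨⟨x, s⟩, h⟩ := IsLocalization.surj M c
    refine ⟨x, s, s.2, aux_inj h0 ?_⟩
    rw [map_mul, map_mul, hc, mul_assoc, h, mul_comm]
  · rintro ⟨a', s, hs, h⟩
    have hu := IsLocalization.map_units (Localization M) (⟨s, hs⟩ : M)
    refine ⟨algebraMap D _ a' * ↑hu.unit⁻¹, ?_⟩
    rw [← mul_assoc, Units.eq_mul_inv_iff_mul_eq, IsUnit.unit_spec]
    rw [← map_mul, ← map_mul]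
    exact congrArg _ (by rw [h, mul_comm])

private theorem aux_isUnit_iff (h0 : (0 : D) ∉ M) (d : D) :
    IsUnit (algebraMap D (Localization M) d) ↔ ∃ a s : D, s ∈ M ∧ d * a = s := by
  constructor
  · rintro ⟨u, hu⟩
    obtain ⟨⟨x, s⟩, h⟩ := IsLocalization.surj M ((↑u⁻¹ : Localization M))
    refine ⟨x, s, s.2, aux_inj h0 ?_⟩
    rw [map_mul, ← h, ← hu, ← mul_assoc, Units.mul_inv, one_mul]
  · rintro ⟨a, s, hs, h⟩
    have : IsUnit (algebraMap D (Localization M) (d * a)) := by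
      rw [h]; exact IsLocalization.map_units _ (⟨s, hs⟩ : M)
    rw [map_mul] at this
    exact isUnit_of_mul_isUnit_left this

private theorem aux_heightOne_comap (h0 : (0 : D) ∉ M) [IsDomain (Localization M)]
    {P' : Ideal (Localization M)} (h : IsHeightOnePrime (Localization M) P') :
    IsHeightOnePrime D (P'.comap (algebraMap D (Localization M))) := by
  obtain ⟨hp, hb, hmin⟩ := h
  refine ⟨hp.comap _, ?_, ?_⟩
  · obtain ⟨x, hx, hx0⟩ := (Submodule.ne_bot_iff _).1 hb
    obtain ⟨⟨y, t⟩, ht⟩ := IsLocalization.surj M x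
    have hy : y ∈ P'.comap (algebraMap D (Localization M)) := by
      rw [Ideal.mem_comap, ← ht]; exact Ideal.mul_mem_right _ _ hx
    refine (Submodule.ne_bot_iff _).2 ⟨y, hy, fun h0' => ?_⟩
    subst h0'
    rw [map_zero] at ht
    rcases mul_eq_zero.1 ht with h | h
    · exact hx0 h
    · exact (IsLocalization.map_units (Localization M) t).ne_zero h
  · intro Q hQ hQP
    have hQle : Q ≤ P'.comap (algebraMap D (Localization M)) := hQP.le
    have hdisj : Disjoint (M : Set D) (Q : Set D) := by
      refine Set.disjoint_left.2 fun s hsM hsQ => ?_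
      have hmem : algebraMap D (Localization M) s ∈ P' := Ideal.mem_comap.1 (hQle hsQ)
      exact hp.ne_top (P'.eq_top_of_isUnit_mem hmem
        (IsLocalization.map_units _ (⟨s, hsM⟩ : M)))
    have hQ' := IsLocalization.isPrime_of_isPrime_disjoint M (Localization M) Q hQ hdisj
    have hcm : Ideal.comap (algebraMap D (Localization M)) (Q.map (algebraMap D (Localization M))) = Q :=
      IsLocalization.comap_map_of_isPrime_disjoint M (Localization M) hQ hdisj
    have hlt : Q.map (algebraMap D (Localization M)) < P' := by
      refine lt_of_le_of_ne (Ideal.map_le_iff_le_comap.2 hQle) fun he => hQP.ne ?_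
      rw [← hcm, he]
    have hbot := hmin _ hQ' hlt
    rw [hbot] at hcm
    rw [← hcm, eq_bot_iff]
    intro x hx
    rw [Ideal.mem_comap, Submodule.mem_bot] at hx
    exact (Submodule.mem_bot _).2 (aux_inj h0 (by rw [hx, map_zero]))

private theorem aux_heightOne_map (h0 : (0 : D) ∉ M) [IsDomain (Localization M)]
    {P : Ideal D} (h : IsHeightOnePrime D P) (hdisj : Disjoint (M : Set D) (P : Set D)) :
    IsHeightOnePrime (Localization M) (P.map (algebraMap D (Localization M))) := by
  obtain ⟨hp, hb, hmin⟩ := h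
  have hcm : Ideal.comap (algebraMap D (Localization M)) (P.map (algebraMap D (Localization M))) = P :=
    IsLocalization.comap_map_of_isPrime_disjoint M (Localization M) hp hdisj
  refine ⟨IsLocalization.isPrime_of_isPrime_disjoint M _ P hp hdisj, ?_, ?_⟩
  · obtain ⟨x, hx, hx0⟩ := (Submodule.ne_bot_iff _).1 hb
    exact (Submodule.ne_bot_iff _).2 ⟨algebraMap D _ x, Ideal.mem_map_of_mem _ hx,
      fun he => hx0 (aux_inj h0 (by rw [he, map_zero]))⟩
  · intro Q' hQ' hlt
    have hQle : Q'.comap (algebraMap D (Localization M)) ≤ P := by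
      rw [← hcm]; exact Ideal.comap_mono hlt.le
    have hQlt : Q'.comap (algebraMap D (Localization M)) < P := by
      refine lt_of_le_of_ne hQle fun he => hlt.ne ?_
      rw [← (show Ideal.map (algebraMap D (Localization M)) (Q'.comap (algebraMap D (Localization M))) = Q'
        from IsLocalization.map_comap M (Localization M) Q'), he]
    have hbotQ := hmin _ (hQ'.comap _) hQlt
    have hmc : Ideal.map (algebraMap D (Localization M)) (Q'.comap (algebraMap D (Localization M))) = Q' :=
      IsLocalization.map_comap M (Localization M) Q'
    rw [hbotQ, Ideal.map_bot] at hmc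
    exact hmc.symm

private theorem aux_pow_mul {P : Ideal D} (h : IsHeightOnePrime D P) {d : D} (hd : d ≠ 0)
    (hdP : d ∈ P) {x : D} (hxP : x ∈ P) :
    ∃ (n : ℕ) (u c : D), u ∉ P ∧ x ^ n * u = d * c := by
  obtain ⟨hp, _, hmin⟩ := h
  by_contra hcon
  push_neg at hcon
  set N : Submonoid D :=
    { carrier := {y | ∃ (n : ℕ) (u : D), u ∉ P ∧ y = x ^ n * u}
      one_mem' := ⟨0, 1, fun h1 => hp.ne_top ((Ideal.eq_top_iff_one _).2 h1), by ring⟩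
      mul_mem' := by
        rintro a b ⟨n, u, hu, rfl⟩ ⟨m, w, hw, rfl⟩
        exact ⟨n + m, u * w, fun hm => (hp.mem_or_mem hm).elim hu hw, by ring⟩ } with hN
  have hdisj : Disjoint ((Ideal.span {d} : Ideal D) : Set D) (N : Set D) := by
    rw [Set.disjoint_left]
    rintro y hy ⟨n, u, hu, rfl⟩
    obtain ⟨c, hc⟩ := Ideal.mem_span_singleton.1 hy
    exact hcon n u c hu hc
  obtain ⟨Q, hQprime, hQle, hQdisj⟩ := Ideal.exists_le_prime_disjoint _ N hdisj
  have hQleP : Q ≤ P := fun y hy => by_contra fun hyP =>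
    (Set.disjoint_left.1 hQdisj hy) ⟨0, y, hyP, by ring⟩
  have h1P : (1 : D) ∉ P := fun h1 => hp.ne_top ((Ideal.eq_top_iff_one _).2 h1)
  have hQltP : Q < P := lt_of_le_of_ne hQleP fun he =>
    (Set.disjoint_left.1 hQdisj (he ▸ hxP)) ⟨1, 1, h1P, by ring⟩
  have hbot := hmin Q hQprime hQltP
  have hdQ : d ∈ Q := hQle (Ideal.mem_span_singleton.2 dvd_rfl)
  rw [hbot] at hdQ
  exact hd ((Submodule.mem_bot _).1 hdQ)

end Aux

/-- Let `D` be an integral domain (not a field) and `{S_λ}` a family of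
multiplicative subsets of `D` such that `D = ⋂_λ D_{S_λ}`, each localization `D_{S_λ}`
is a weakly Krull domain, and the intersection has finite character (each nonzero
element of `D` is a nonunit in only finitely many `D_{S_λ}`). Then `D` is a weakly
Krull domain. -/
theorem weaklyKrull_of_finiteCharacter_intersection
    (D : Type*) [CommRing D] [IsDomain D] (hD : ¬ IsField D)
    {ι : Type*} (S : ι → Submonoid D) (h0 : ∀ i, (0 : D) ∉ S i)
    [∀ i, IsDomain (Localization (S i))]
    -- `D = ⋂_λ D_{S_λ}`, expressed via fractions `a / b` of the quotient field:
    (hinter : ∀ a b : D, b ≠ 0 →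
      ((∀ i, ∃ a' s : D, s ∈ S i ∧ a * s = a' * b) ↔ b ∣ a))
    -- each `D_{S_λ}` is a weakly Krull domain:
    (hWK : ∀ i, IsWeaklyKrullDomain (Localization (S i)))
    -- finite character: each nonzero `d ∈ D` is a unit in all but finitely many `D_{S_λ}`:
    (hfc : ∀ d : D, d ≠ 0 → {i : ι | ¬ ∃ a s : D, s ∈ S i ∧ d * a = s}.Finite) :
    IsWeaklyKrullDomain D := by
  classical
  have hinj : ∀ i, Function.Injective (algebraMap D (Localization (S i))) :=
    fun i => aux_inj (h0 i)
  refine ⟨hD, ?_, ?_⟩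
  · intro a b hb
    constructor
    · intro h
      by_contra hba
      obtain ⟨i, hi⟩ := not_forall.1 (fun hall => hba ((hinter a b hb).1 hall))
      have hfb : algebraMap D (Localization (S i)) b ≠ 0 :=
        fun he => hb (hinj i (by rw [he, map_zero]))
      have hndvd : ¬ (algebraMap D (Localization (S i)) b ∣
          algebraMap D (Localization (S i)) a) :=
        fun hdvd => hi ((aux_dvd_iff (h0 i) a b).1 hdvd)
      have hiff := (hWK i).2.1 (algebraMap D _ a) (algebraMap D _ b) hfb
      rw [← hiff] at hndvd
      push_neg at hndvd
      obtain ⟨P', hP', hnm⟩ := hndvd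
      obtain ⟨a', s, hs, heq⟩ := h _ (aux_heightOne_comap (h0 i) hP')
      exact hnm ⟨algebraMap D _ a', algebraMap D _ s, fun hm => hs (Ideal.mem_comap.2 hm),
        by rw [← map_mul, ← map_mul, heq]⟩
    · rintro ⟨k, hk⟩ P hP
      exact ⟨k, 1, fun h1 => hP.1.ne_top ((Ideal.eq_top_iff_one _).2 h1),
        by rw [mul_one, hk, mul_comm]⟩
  · intro d hd _
    set F := (hfc d hd).toFinset with hF
    have hTfin : ∀ i, {P' : Ideal (Localization (S i)) |
        IsHeightOnePrime (Localization (S i)) P' ∧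
          algebraMap D (Localization (S i)) d ∈ P'}.Finite := by
      intro i
      by_cases hu : IsUnit (algebraMap D (Localization (S i)) d)
      · convert Set.finite_empty
        rw [Set.eq_empty_iff_forall_notMem]
        rintro P' ⟨hP', hdP'⟩
        exact hP'.1.ne_top (P'.eq_top_of_isUnit_mem hdP' hu)
      · exact (hWK i).2.2 _ (fun he => hd (hinj i (by rw [he, map_zero]))) hu
    have hsurv : ∀ P : Ideal D, IsHeightOnePrime D P → d ∈ P →
        ∃ i, Disjoint ((S i : Set D)) (P : Set D) := by
      intro P hP hdP
      by_contra hno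
      push_neg at hno
      have hmeet : ∀ i, ∃ v t : D, t ∈ S i ∧ v ∉ P ∧ d ∣ v * t ∧ (i ∉ F → v = 1) := by
        intro i
        by_cases hiF : i ∈ F
        · obtain ⟨x, hxS, hxP⟩ := Set.not_disjoint_iff.1 (hno i)
          obtain ⟨n, u, c, hu, heq⟩ := aux_pow_mul hP hd hdP hxP
          exact ⟨u, x ^ n, pow_mem hxS n, hu, ⟨c, by rw [mul_comm u, heq]⟩,
            fun hc => absurd hiF hc⟩
        · have hex : ∃ a s : D, s ∈ S i ∧ d * a = s := by
            by_contra hc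
            exact hiF ((hfc d hd).mem_toFinset.2 hc)
          obtain ⟨a, s, hs, hds⟩ := hex
          exact ⟨1, s, hs, fun h1 => hP.1.ne_top ((Ideal.eq_top_iff_one _).2 h1),
            ⟨a, by rw [one_mul, ← hds]⟩, fun _ => rfl⟩
      choose v t htS hvP hdvd hone using hmeet
      have huP : (∏ i ∈ F, v i) ∉ P :=
        Finset.prod_induction v (· ∉ P)
          (fun x y hx hy hxy => (hP.1.mem_or_mem hxy).elim hx hy)
          (fun h1 => hP.1.ne_top ((Ideal.eq_top_iff_one _).2 h1))
          (fun i _ => hvP i)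
      have hall : ∀ i, ∃ a' s : D, s ∈ S i ∧ (∏ i ∈ F, v i) * s = a' * d := by
        intro i
        have hvd : v i ∣ ∏ j ∈ F, v j := by
          by_cases hiF : i ∈ F
          · exact Finset.dvd_prod_of_mem v hiF
          · rw [hone i hiF]; exact one_dvd _
        obtain ⟨w, hw⟩ := hvd
        obtain ⟨c, hc⟩ := hdvd i
        exact ⟨c * w, t i, htS i, by rw [hw]; linear_combination w * hc⟩
      obtain ⟨k, hk⟩ := (hinter _ d hd).1 hall
      exact huP (hk ▸ Ideal.mul_mem_right k P hdP)
    have hsub : {P : Ideal D | IsHeightOnePrime D P ∧ d ∈ P} ⊆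
        ⋃ i ∈ (F : Set ι), (Ideal.comap (algebraMap D (Localization (S i)))) ''
          {P' : Ideal (Localization (S i)) | IsHeightOnePrime (Localization (S i)) P' ∧
            algebraMap D (Localization (S i)) d ∈ P'} := by
      rintro P ⟨hP, hdP⟩
      obtain ⟨i, hdisj⟩ := hsurv P hP hdP
      have hiF : i ∈ (F : Set ι) := by
        rw [Finset.mem_coe, (hfc d hd).mem_toFinset]
        rintro ⟨a, s, hs, hds⟩
        exact Set.disjoint_left.1 hdisj hs (hds ▸ Ideal.mul_mem_right a P hdP)
      exact Set.mem_biUnion hiF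
        ⟨P.map (algebraMap D (Localization (S i))),
          ⟨aux_heightOne_map (h0 i) hP hdisj, Ideal.mem_map_of_mem _ hdP⟩,
          IsLocalization.comap_map_of_isPrime_disjoint _ _ hP.1 hdisj⟩
    exact Set.Finite.subset
      (Set.Finite.biUnion F.finite_toSet (fun i _ => (hTfin i).image _)) hsub


end WeaklyKrullPaper
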